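/- arXiv:2103.08015 — 3 statements merged into one kernel-verified Lean document; each statement's English description precedes it below -/
import Mathlib

section
/- For every integer n ≥ 1 and every real x, 2x·F_{2n}(x) = x·U_{2n-1}(x) − (3x²−4)·Σ_{k=1}^{n-1} U_{2(n-k)-1}(x)·F_{2k}(x). -/
/-- Chebyshev polynomials of the first kind. -/
def T : ℕ → ℝ → ℝ
  | 0, _ => 1
  | 1, x => x
  | (n+2), x => 2*x*T (n+1) x - T n x

/-- Chebyshev polynomials of the second kind. -/
def U : ℕ → ℝ → ℝ
  | 0, _ => 1
  | 1, x => 2*x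
  | (n+2), x => 2*x*U (n+1) x - U n x

/-- Fibonacci polynomials. -/
def F : ℕ → ℝ → ℝ
  | 0, _ => 0
  | 1, _ => 1
  | (n+2), x => x*F (n+1) x + F n x

/-- Balancing polynomials. -/
def B : ℕ → ℝ → ℝ
  | 0, _ => 0
  | 1, _ => 1
  | (n+2), x => 6*x*B (n+1) x - B n x

/-- Lucas-balancing polynomials. -/
def C : ℕ → ℝ → ℝ
  | 0, _ => 1
  | 1, x => 3*x
  | (n+2), x => 6*x*C (n+1) x - C n x

/-- Lucas numbers. -/
def lucas : ℕ → ℤ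
  | 0 => 2
  | 1 => 1
  | (n+2) => lucas (n+1) + lucas n

/- The sequences F_{2k}(x) and U_{2k+1}(x) both satisfy three-term recurrences
s_{k+2} = c s_{k+1} - s_k, with c = x² + 2 and c = 4x² - 2, so their generating functions have
denominators 1 - ct + t². Two such denominators differ by a multiple of t, here
(4x² - 2 - (x² + 2)) t = (3x² - 4) t, which turns the Cauchy product of the two generating functions
into a combination of the factors themselves. The boundary terms vanish because F_0 = 0 and
U_{-1} = 0, leaving (3x² - 4) ∑_{i+j=n-1} F_{2i} U_{2j+1} = x U_{2n-1} - 2x F_{2n}. -/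

open Finset.HasAntidiagonal

lemma add_four_eq_of_add_two_eq {R : Type*} [CommRing R] {s : ℕ → R} {c d : R}
    (hs : ∀ n, s (n + 2) = c * s (n + 1) + d * s n) (n : ℕ) :
    s (n + 4) = (c ^ 2 + 2 * d) * s (n + 2) - d ^ 2 * s n := by
  linear_combination hs (n + 2) + c * hs (n + 1) - d * hs n

-- the coefficient of t^(m+1) in (q - p) t A B = B · (1 - p t + t²) A - A · (1 - q t + t²) B
lemma sub_mul_sum_antidiagonal_of_recurrence {R : Type*} [CommRing R] {a b : ℕ → R} {p q : R}
    (ha : ∀ k, a (k + 2) = p * a (k + 1) - a k) (hb : ∀ k, b (k + 2) = q * b (k + 1) - b k)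
    (m : ℕ) :
    (q - p) * ∑ ij ∈ antidiagonal m, a ij.1 * b ij.2 =
      a 0 * b (m + 1) + (a 1 - p * a 0) * b m - b 0 * a (m + 1) - (b 1 - q * b 0) * a m := by
  induction m generalizing a with
  | zero => simp only [antidiagonal_zero, Finset.sum_singleton, zero_add]; ring
  | succ m ih =>
    rw [Finset.Nat.sum_antidiagonal_succ, mul_add, ih (a := fun k ↦ a (k + 1)) (fun k ↦ ha (k + 1))]
    linear_combination (-a 0) * hb m + b m * ha 0

lemma F_two_mul_add_four (k : ℕ) (x : ℝ) :
    F (2 * k + 4) x = (x ^ 2 + 2) * F (2 * k + 2) x - F (2 * k) x := by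
  rw [add_four_eq_of_add_two_eq (s := (F · x)) (c := x) (d := 1) (fun n ↦ by simp only [F]; ring)]
  ring

lemma U_two_mul_add_five (k : ℕ) (x : ℝ) :
    U (2 * k + 5) x = (4 * x ^ 2 - 2) * U (2 * k + 3) x - U (2 * k + 1) x := by
  rw [add_four_eq_of_add_two_eq (s := (U · x)) (c := 2 * x) (d := -1) (fun n ↦ by simp only [U]; ring)]
  ring

theorem stmt7 (n : ℕ) (hn : 1 ≤ n) (x : ℝ) :
    2*x * F (2*n) x =
      x * U (2*n-1) x - (3*x^2 - 4) * ∑ k ∈ Finset.Icc 1 (n-1), U (2*(n-k)-1) x * F (2*k) x := by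
  obtain ⟨m, rfl⟩ : ∃ m, n = m + 1 := ⟨n - 1, by omega⟩
  have conv := sub_mul_sum_antidiagonal_of_recurrence (a := fun k ↦ F (2 * k) x)
    (b := fun k ↦ U (2 * k + 1) x) (F_two_mul_add_four · x) (U_two_mul_add_five · x) m
  have hsum_eq : ∑ k ∈ Finset.Icc 1 (m + 1 - 1), U (2 * (m + 1 - k) - 1) x * F (2 * k) x =
      ∑ ij ∈ antidiagonal m, F (2 * ij.1) x * U (2 * ij.2 + 1) x := by
    rw [Finset.Nat.sum_antidiagonal_eq_sum_range_succ_mk, Nat.succ_eq_add_one, Finset.range_eq_Ico,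
      Finset.sum_eq_sum_Ico_succ_bot (by omega), zero_add, Finset.Ico_add_one_right_eq_Icc,
      Nat.add_sub_cancel, mul_zero, F, zero_mul, zero_add]
    refine Finset.sum_congr rfl fun k hk ↦ ?_
    rw [mul_comm, show 2 * (m + 1 - k) - 1 = 2 * (m - k) + 1 by grind]
  rw [hsum_eq, show 2 * (m + 1) - 1 = 2 * m + 1 by omega]
  simp only [F, U] at conv
  linear_combination conv
end

section
/- For every integer n ≥ 1 and every real x, F_{2n+1}(x) − x·F_{2n-1}(x) = T_n(x) − T_{n-1}(x) + (x²−2x+2)·Σ_{k=0}^{n-1} T_{n-1-k}(x)·F_{2k+1}(x). -/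
/-!
Convolving a sequence `a` with the Chebyshev polynomials, `S m = ∑_{k ≤ m} T (m-k) x * a k`,
turns the recurrence of `T` into `S (m+2) - 2x S (m+1) + S m = a (m+2) - x a (m+1)`.
The odd-index Fibonacci polynomials `G m = F (2m+1) x` obey `G (m+2) = (x²+2) G (m+1) - G m`,
from which `D m = G (m+1) - x G m` satisfies
`D (m+2) - 2x D (m+1) + D m = (x²-2x+2) (G (m+2) - x G (m+1))`.
So both sides of the identity obey the same inhomogeneous Chebyshev recurrence, and they agree
for `n = 1, 2`.
-/

theorem T_add_two (n : ℕ) (x : ℝ) : T (n + 2) x = 2 * x * T (n + 1) x - T n x := rfl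

theorem F_add_two (n : ℕ) (x : ℝ) : F (n + 2) x = x * F (n + 1) x + F n x := rfl

theorem F_add_four (n : ℕ) (x : ℝ) : F (n + 4) x = (x ^ 2 + 2) * F (n + 2) x - F n x := by
  linear_combination F_add_two (n + 2) x + x * F_add_two (n + 1) x - F_add_two n x

noncomputable def chebyshevTConv (x : ℝ) (a : ℕ → ℝ) (m : ℕ) : ℝ :=
  ∑ k ∈ Finset.range (m + 1), T (m - k) x * a k

theorem chebyshevTConv_succ (x : ℝ) (a : ℕ → ℝ) (m : ℕ) :
    chebyshevTConv x a (m + 1) =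
      ∑ k ∈ Finset.range (m + 1), T (m + 1 - k) x * a k + a (m + 1) := by
  rw [chebyshevTConv, Finset.sum_range_succ, Nat.sub_self, T, one_mul]

theorem chebyshevTConv_add_two (x : ℝ) (a : ℕ → ℝ) (m : ℕ) :
    chebyshevTConv x a (m + 2) =
      2 * x * chebyshevTConv x a (m + 1) - chebyshevTConv x a m + a (m + 2) - x * a (m + 1) := by
  have hshift : ∑ k ∈ Finset.range (m + 1), T (m + 2 - k) x * a k =
      2 * x * ∑ k ∈ Finset.range (m + 1), T (m + 1 - k) x * a k - chebyshevTConv x a m := by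
    rw [chebyshevTConv, Finset.mul_sum, ← Finset.sum_sub_distrib]
    refine Finset.sum_congr rfl fun k hk => ?_
    have hkm : k ≤ m := Nat.lt_succ_iff.mp (Finset.mem_range.mp hk)
    rw [show m + 2 - k = m - k + 2 by omega, show m + 1 - k = m - k + 1 by omega, T_add_two]
    ring
  have htop : ∑ k ∈ Finset.range (m + 2), T (m + 2 - k) x * a k =
      ∑ k ∈ Finset.range (m + 1), T (m + 2 - k) x * a k + x * a (m + 1) := by
    rw [Finset.sum_range_succ, show m + 2 - (m + 1) = 1 by omega, T]
  rw [chebyshevTConv_succ, chebyshevTConv_succ, htop, hshift]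
  ring

theorem F_odd_sub_mul_F_odd (x : ℝ) (m : ℕ) :
    F (2 * m + 3) x - x * F (2 * m + 1) x =
      T (m + 1) x - T m x + (x ^ 2 - 2 * x + 2) * chebyshevTConv x (fun k => F (2 * k + 1) x) m := by
  induction m using Nat.twoStepInduction with
  | zero =>
    simp only [chebyshevTConv, zero_add, Finset.sum_range_one, Nat.sub_self, T, F, one_mul]
    ring
  | one =>
    simp only [chebyshevTConv, Finset.sum_range_succ, Nat.reduceAdd,
      Nat.sub_zero, Nat.sub_self, T, F]
    ring
  | more m ih₀ ih₁ =>
    rw [show 2 * (m + 1) + 3 = 2 * m + 5 by omega, show 2 * (m + 1) + 1 = 2 * m + 3 by omega]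
      at ih₁
    rw [show 2 * (m + 2) + 3 = 2 * m + 7 by omega, show 2 * (m + 2) + 1 = 2 * m + 5 by omega]
    linear_combination F_add_four (2 * m + 3) x - x * F_add_four (2 * m + 1) x
      - (x ^ 2 - 2 * x + 2) * chebyshevTConv_add_two x (fun k => F (2 * k + 1) x) m
      - ih₀ + 2 * x * ih₁ - T_add_two (m + 1) x + T_add_two m x

theorem stmt9 (n : ℕ) (hn : 1 ≤ n) (x : ℝ) :
    F (2*n+1) x - x * F (2*n-1) x =
      T n x - T (n-1) x + (x^2 - 2*x + 2) * ∑ k ∈ Finset.range n, T (n-1-k) x * F (2*k+1) x := by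
  obtain ⟨m, rfl⟩ : ∃ m, n = m + 1 := ⟨n - 1, by omega⟩
  rw [show 2 * (m + 1) + 1 = 2 * m + 3 by omega, show 2 * (m + 1) - 1 = 2 * m + 1 by omega,
    Nat.add_sub_cancel]
  exact F_odd_sub_mul_F_odd x m
end

section
/- For every integer n ≥ 1, 15·F_{2n} = 4·(4^n − 4^{−n}) − 5·Σ_{k=1}^{n-1} (4^k − 4^{−k})·F_{2(n−k)}, where F_m denotes the m-th Fibonacci number (identity in the rationals). -/
/-!
Write `f n = F_{2n}` and `a k = 4^k - 4^{-k}`; since `a 0 = f 0 = 0`, the sum is the full Cauchy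
product `(a ⋆ f) n`. Both `f` and `a ⋆ f` satisfy `u (n+2) = 3 u (n+1) - u n`, the latter up to
the inhomogeneous term `a (n+1)`, while `a (n+2) = 17/4 a (n+1) - a n`. These combine so that
`15 f + 5 (a ⋆ f) - 4 a` satisfies the homogeneous recurrence; it vanishes at `0` and `1`, hence
everywhere.
-/

open Finset

section CauchyProduct

variable {R : Type*} [CommRing R]

def cauchyProduct (a f : ℕ → R) (n : ℕ) : R :=
  ∑ p ∈ antidiagonal n, a p.1 * f p.2

lemma cauchyProduct_eq_sum_Icc {a f : ℕ → R} (ha : a 0 = 0) (hf : f 0 = 0) (n : ℕ) :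
    cauchyProduct a f n = ∑ k ∈ Icc 1 (n - 1), a k * f (n - k) := by
  rw [cauchyProduct, Nat.sum_antidiagonal_eq_sum_range_succ_mk]
  symm
  apply sum_subset
  · intro k hk
    simp only [mem_Icc, mem_range] at hk ⊢
    omega
  · intro k hk hk'
    simp only [mem_Icc, mem_range] at hk hk'
    obtain rfl | rfl : k = 0 ∨ k = n := by omega
    · simp [ha]
    · simp [hf]

lemma cauchyProduct_succ {a f : ℕ → R} (hf : f 0 = 0) (n : ℕ) :
    cauchyProduct a f (n + 1) = ∑ p ∈ antidiagonal n, a p.1 * f (p.2 + 1) := by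
  simp [cauchyProduct, Nat.sum_antidiagonal_succ', hf]

lemma cauchyProduct_add_two {a f : ℕ → R} {c d : R} (hf₀ : f 0 = 0) (hf₁ : f 1 = 1)
    (hf : ∀ n, f (n + 2) = c * f (n + 1) + d * f n) (n : ℕ) :
    cauchyProduct a f (n + 2) =
      c * cauchyProduct a f (n + 1) + d * cauchyProduct a f n + a (n + 1) := by
  rw [cauchyProduct_succ hf₀, Nat.sum_antidiagonal_succ', cauchyProduct_succ hf₀, cauchyProduct]
  simp only [hf, hf₁, mul_add, sum_add_distrib, mul_sum, mul_left_comm c, mul_left_comm d]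
  ring

end CauchyProduct

lemma eq_zero_of_two_step_rec {R : Type*} [CommRing R] {u : ℕ → R} {c d : R}
    (h₀ : u 0 = 0) (h₁ : u 1 = 0) (h : ∀ n, u (n + 2) = c * u (n + 1) + d * u n) (n : ℕ) :
    u n = 0 := by
  induction n using Nat.twoStepInduction with
  | zero => exact h₀
  | one => exact h₁
  | more n ih₀ ih₁ => rw [h, ih₀, ih₁, mul_zero, mul_zero, add_zero]

lemma pow_sub_inv_pow_add_two {K : Type*} [Field K] {x : K} (hx : x ≠ 0) (n : ℕ) :
    x ^ (n + 2) - (x ^ (n + 2))⁻¹ =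
      (x + x⁻¹) * (x ^ (n + 1) - (x ^ (n + 1))⁻¹) - (x ^ n - (x ^ n)⁻¹) := by
  field_simp
  ring

lemma Nat.fib_two_mul_add_four (n : ℕ) :
    fib (2 * (n + 2)) + fib (2 * n) = 3 * fib (2 * (n + 1)) := by
  have h₂ : fib (2 * n + 2) = fib (2 * n) + fib (2 * n + 1) := fib_add_two
  have h₃ : fib (2 * n + 3) = fib (2 * n + 1) + fib (2 * n + 2) := fib_add_two
  have h₄ : fib (2 * n + 4) = fib (2 * n + 2) + fib (2 * n + 3) := fib_add_two
  rw [show 2 * (n + 2) = 2 * n + 4 by ring, show 2 * (n + 1) = 2 * n + 2 by ring]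
  omega

theorem stmt16_general (n : ℕ) :
    15 * (Nat.fib (2*n) : ℚ) =
      4 * ((4:ℚ)^(n:ℤ) - (4:ℚ)^(-(n:ℤ))) -
        5 * ∑ k ∈ Finset.Icc 1 (n-1), ((4:ℚ)^(k:ℤ) - (4:ℚ)^(-(k:ℤ))) * (Nat.fib (2*(n-k)) : ℚ) := by
  set a : ℕ → ℚ := fun k ↦ 4 ^ k - (4 ^ k)⁻¹ with ha
  set f : ℕ → ℚ := fun k ↦ Nat.fib (2 * k) with hf
  have hf_rec (k : ℕ) : f (k + 2) = 3 * f (k + 1) + (-1) * f k := by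
    have h : (Nat.fib (2 * (k + 2)) : ℚ) + Nat.fib (2 * k) = 3 * Nat.fib (2 * (k + 1)) := by
      exact_mod_cast Nat.fib_two_mul_add_four k
    simp only [hf]
    linarith
  have ha_rec (k : ℕ) : a (k + 2) = 17 / 4 * a (k + 1) - a k := by
    simp only [ha, pow_sub_inv_pow_add_two (x := (4 : ℚ)) four_ne_zero]; norm_num
  have hg : ∀ k, 15 * f k + 5 * cauchyProduct a f k - 4 * a k = 0 := by
    refine eq_zero_of_two_step_rec (c := 3) (d := -1) ?_ ?_ fun k ↦ ?_
    · simp [ha, hf, cauchyProduct]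
    · norm_num [ha, hf, cauchyProduct, Nat.sum_antidiagonal_succ]
    · rw [cauchyProduct_add_two (by simp [hf]) (by simp [hf]) hf_rec, hf_rec, ha_rec]
      ring
  have hsum : ∑ k ∈ Icc 1 (n - 1), ((4:ℚ) ^ (k:ℤ) - (4:ℚ) ^ (-(k:ℤ))) * (Nat.fib (2 * (n - k)) : ℚ) =
      cauchyProduct a f n := by
    rw [cauchyProduct_eq_sum_Icc (by simp [ha]) (by simp [hf])]
    simp [ha, hf, zpow_neg]
  rw [hsum, zpow_neg, zpow_natCast]
  linear_combination hg n

theorem stmt16 (n : ℕ) (hn : 1 ≤ n) :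
    15 * (Nat.fib (2*n) : ℚ) =
      4 * ((4:ℚ)^(n:ℤ) - (4:ℚ)^(-(n:ℤ))) -
        5 * ∑ k ∈ Finset.Icc 1 (n-1), ((4:ℚ)^(k:ℤ) - (4:ℚ)^(-(k:ℤ))) * (Nat.fib (2*(n-k)) : ℚ) :=
  stmt16_general n
end
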